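/- Let Λ be an A-lattice in a finite-dimensional normed K_∞-vector space V and ω_1,…,ω_d a greedy successive-minimum sequence. Then for each i, Λ ∩ span_{K_∞}(ω_1,…,ω_i) = A-span(ω_1,…,ω_i); in particular Λ = A-span(ω_1,…,ω_d), i.e. the successive minima form an A-basis of Λ. -/

import Mathlib

open Filter
open scoped Classical

/-- The absolute value `|f| = σ^(ord f)` on the Laurent series field `K∞ = k((π))`,
`π = 1/T`; for a polynomial `f` in `T` this is `σ^(-deg f)`. -/
noncomputable def absLS (k : Type*) [Field k] (σ : ℝ) (f : LaurentSeries k) : ℝ :=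
  if f = 0 then 0 else σ ^ f.order

/-- The embedding of `A = k[T]` into `K∞ = k((π))`, sending `T` to `π⁻¹`. -/
noncomputable def polyToLS (k : Type*) [Field k] : Polynomial k →ₐ[k] LaurentSeries k :=
  Polynomial.aeval (HahnSeries.single (1 : ℤ) (1 : k))⁻¹

/-- The `A`-lattice spanned by the vectors `b i`: all `A`-linear combinations of the `b i`. -/
def latticeA (k : Type*) [Field k] {V : Type*} [AddCommGroup V]
    [Module (LaurentSeries k) V] {d : ℕ} (b : Fin d → V) : Set V :=
  {x | ∃ a : Fin d → Polynomial k, x = ∑ i, polyToLS k (a i) • b i}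

/-!
Write a lattice vector `x ∈ Λ ∩ span(ω₁, …, ω_i)` as `∑ λ_j ω_j` and split each coefficient as
`λ_j = λ_j^A + λ_j^m` with `λ_j^A ∈ A` and `|λ_j^m| < 1`. Then `y = ∑ λ_j^m ω_j` lies in `Λ`.
If some `λ_j^m` were nonzero, let `j₀` be the largest such index: `y` is then outside the span of
`ω_j, j < j₀`, so greedy minimality gives `N ω_{j₀} ≤ N y`, whereas the ultrametric inequality and
`N ω_j ≤ N ω_{j₀}` for `j ≤ j₀` give `N y < N ω_{j₀}`. Hence every `λ_j` lies in `A`. For `i = d`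
the span is all of `V`, since the `ω_j` are linearly independent and `d = dim V`.
-/

open Polynomial Submodule

section LaurentSeries

variable {k : Type*} [Field k]

theorem absLS_zero (σ : ℝ) : absLS k σ 0 = 0 := by
  simp [absLS]

theorem absLS_neg_one (σ : ℝ) : absLS k σ (-1) = 1 := by
  simp [absLS]

theorem polyToLS_monomial (n : ℕ) (a : k) :
    polyToLS k (monomial n a) = HahnSeries.single (-(n : ℤ)) a := by
  simp [polyToLS, aeval_monomial, HahnSeries.single_pow, LaurentSeries.algebraMap_apply]

theorem coeff_polyToLS_neg_natCast (p : Polynomial k) (n : ℕ) :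
    (polyToLS k p).coeff (-(n : ℤ)) = p.coeff n := by
  induction p using Polynomial.induction_on' with
  | add p q hp hq => simp [hp, hq]
  | monomial m a =>
    rw [polyToLS_monomial, HahnSeries.coeff_single, coeff_monomial]
    simp [eq_comm]

/-- The polynomial part `λ^A` of a Laurent series `λ`: its terms of nonpositive degree in `π`. -/
noncomputable def polyPart (f : LaurentSeries k) : Polynomial k :=
  ∑ n ∈ Finset.range ((-f.order).toNat + 1), monomial n (f.coeff (-(n : ℤ)))

theorem coeff_polyPart (f : LaurentSeries k) (n : ℕ) :
    (polyPart f).coeff n = f.coeff (-(n : ℤ)) := by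
  rw [polyPart, finsetSum_coeff, Finset.sum_eq_single n]
  · exact coeff_monomial_same _ _
  · exact fun m _ hm => coeff_monomial_of_ne _ hm.symm
  · intro hn
    rw [coeff_monomial_same]
    exact HahnSeries.coeff_eq_zero_of_lt_order (by simp only [Finset.mem_range, not_lt] at hn; omega)

@[simp]
theorem polyPart_zero : polyPart (0 : LaurentSeries k) = 0 := by
  simp [polyPart]

theorem coeff_sub_polyToLS_polyPart_of_nonpos (f : LaurentSeries k) {m : ℤ} (hm : m ≤ 0) :
    (f - polyToLS k (polyPart f)).coeff m = 0 := by
  obtain ⟨n, rfl⟩ : ∃ n : ℕ, m = -(n : ℤ) := ⟨(-m).toNat, by omega⟩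
  rw [HahnSeries.coeff_sub, coeff_polyToLS_neg_natCast, coeff_polyPart, sub_self]

theorem absLS_sub_polyToLS_polyPart_lt_one {σ : ℝ} (hσ0 : 0 < σ) (hσ1 : σ < 1)
    (f : LaurentSeries k) : absLS k σ (f - polyToLS k (polyPart f)) < 1 := by
  set g := f - polyToLS k (polyPart f)
  rw [absLS]
  split_ifs with hg
  · exact one_pos
  have hord : 0 < g.order := by
    by_contra! hle
    exact HahnSeries.coeff_order_eq_zero.not.mpr hg (coeff_sub_polyToLS_polyPart_of_nonpos f hle)
  exact zpow_lt_one₀ hσ0 hσ1 hord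

end LaurentSeries

section Lattice

variable {k V ι : Type*} [Field k] [AddCommGroup V] [Module (LaurentSeries k) V] {d : ℕ}

theorem sub_mem_latticeA {b : Fin d → V} {x y : V} (hx : x ∈ latticeA k b)
    (hy : y ∈ latticeA k b) : x - y ∈ latticeA k b := by
  obtain ⟨a, rfl⟩ := hx
  obtain ⟨a', rfl⟩ := hy
  exact ⟨a - a', by simp only [Pi.sub_apply, map_sub, sub_smul, Finset.sum_sub_distrib]⟩

theorem sum_polyToLS_smul_mem_latticeA [Fintype ι] {b : Fin d → V} {ω : ι → V}
    (hω : ∀ j, ω j ∈ latticeA k b) (a : ι → Polynomial k) :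
    ∑ j, polyToLS k (a j) • ω j ∈ latticeA k b := by
  choose m hm using hω
  refine ⟨fun l => ∑ j, a j * m j l, ?_⟩
  simp only [hm, Finset.smul_sum, smul_smul, ← map_mul, map_sum, Finset.sum_smul]
  exact Finset.sum_comm

end Lattice

section Span

theorem exists_eq_sum_smul_of_mem_span_image {R M ι : Type*} [Semiring R] [AddCommMonoid M]
    [Module R M] [Fintype ι] {ω : ι → M} {s : Set ι} {x : M} (hx : x ∈ span R (ω '' s)) :
    ∃ c : ι → R, (∀ j ∉ s, c j = 0) ∧ x = ∑ j, c j • ω j := by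
  obtain ⟨l, hl, rfl⟩ := (Finsupp.mem_span_image_iff_linearCombination R).mp hx
  exact ⟨l, (Finsupp.mem_supported' R l).mp hl,
    Finsupp.sum_fintype _ _ fun _ => zero_smul _ _⟩

variable {K V ι : Type*} [Field K] [AddCommGroup V] [Module K V] [Fintype ι] [LinearOrder ι]

theorem exists_ne_zero_forall_gt_eq_zero {M : Type*} [Zero M] {c : ι → M} (hc : c ≠ 0) :
    ∃ i, c i ≠ 0 ∧ ∀ j, i < j → c j = 0 := by
  obtain ⟨i, hi, hmax⟩ := (Finset.univ.filter (c · ≠ 0)).exists_max_image id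
    (by simpa [Finset.filter_nonempty_iff, Function.ne_iff] using hc)
  simp only [Finset.mem_filter, Finset.mem_univ, true_and, id] at hi hmax
  exact ⟨i, hi, fun j hij => by_contra fun hj => (hmax j hj).not_gt hij⟩

theorem sum_smul_notMem_span_lt {ω : ι → V} {c : ι → K} {i : ι}
    (hω : ω i ∉ span K (ω '' {j | j < i})) (hci : c i ≠ 0) (hc : ∀ j, i < j → c j = 0) :
    ∑ j, c j • ω j ∉ span K (ω '' {j | j < i}) := by
  intro h
  have hrest : ∑ j ∈ Finset.univ.erase i, c j • ω j ∈ span K (ω '' {j | j < i}) := by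
    refine sum_mem fun j hj => ?_
    rcases lt_trichotomy j i with hlt | rfl | hgt
    · exact smul_mem _ _ (subset_span ⟨j, hlt, rfl⟩)
    · exact absurd rfl (Finset.ne_of_mem_erase hj)
    · rw [hc j hgt, zero_smul]
      exact zero_mem _
  rw [← Finset.add_sum_erase _ _ (Finset.mem_univ i), Submodule.add_mem_iff_left _ hrest] at h
  exact hω ((smul_mem_iff _ hci).mp h)

theorem linearIndependent_of_notMem_span_lt {ω : ι → V}
    (hω : ∀ i, ω i ∉ span K (ω '' {j | j < i})) : LinearIndependent K ω := by
  rw [Fintype.linearIndependent_iff]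
  intro c hc
  by_contra! hne
  obtain ⟨i, hci, htop⟩ := exists_ne_zero_forall_gt_eq_zero (Function.ne_iff.mpr hne)
  exact sum_smul_notMem_span_lt (hω i) hci htop (hc ▸ zero_mem _)

end Span

structure IsUltrametricNorm (k : Type*) [Field k] {V : Type*} [AddCommGroup V]
    [Module (LaurentSeries k) V] (σ : ℝ) (N : V → ℝ) : Prop where
  eq_zero_iff : ∀ x, N x = 0 ↔ x = 0
  map_smul : ∀ (c : LaurentSeries k) (x : V), N (c • x) = absLS k σ c * N x
  map_add_le_max : ∀ x y, N (x + y) ≤ max (N x) (N y)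

namespace IsUltrametricNorm

variable {k V : Type*} [Field k] [AddCommGroup V] [Module (LaurentSeries k) V] {σ : ℝ}
  {N : V → ℝ}

theorem nonneg (hN : IsUltrametricNorm k σ N) (x : V) : 0 ≤ N x := by
  have hneg : N (-x) = N x := by
    rw [← neg_one_smul (LaurentSeries k) x, hN.map_smul, absLS_neg_one, one_mul]
  simpa [(hN.eq_zero_iff 0).mpr rfl, hneg] using hN.map_add_le_max x (-x)

theorem pos (hN : IsUltrametricNorm k σ N) {x : V} (hx : x ≠ 0) : 0 < N x :=
  (hN.nonneg x).lt_of_ne fun h => hx ((hN.eq_zero_iff x).mp h.symm)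

end IsUltrametricNorm

structure IsSuccessiveMinima (K : Type*) {V ι : Type*} [Field K] [AddCommGroup V] [Module K V]
    [LT ι] (N : V → ℝ) (Λ : Set V) (ω : ι → V) : Prop where
  mem : ∀ i, ω i ∈ Λ
  notMem_span : ∀ i, ω i ∉ span K (ω '' {j | j < i})
  le_of_notMem_span : ∀ i, ∀ x ∈ Λ, x ∉ span K (ω '' {j | j < i}) → N (ω i) ≤ N x

namespace IsSuccessiveMinima

section

variable {K V ι : Type*} [Field K] [AddCommGroup V] [Module K V] [LinearOrder ι] {N : V → ℝ}
  {Λ : Set V} {ω : ι → V}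

theorem ne_zero (hω : IsSuccessiveMinima K N Λ ω) (i : ι) : ω i ≠ 0 :=
  fun h => hω.notMem_span i (h ▸ zero_mem _)

theorem monotone (hω : IsSuccessiveMinima K N Λ ω) : Monotone (N ∘ ω) := fun i j hij =>
  hω.le_of_notMem_span i _ (hω.mem j) fun h =>
    hω.notMem_span j (span_mono (Set.image_mono fun _ hl => lt_of_lt_of_le hl hij) h)

end

variable {k V ι : Type*} [Field k] [AddCommGroup V] [Module (LaurentSeries k) V] [Fintype ι]
  [LinearOrder ι] {σ : ℝ} {N : V → ℝ} {ω : ι → V}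

theorem eq_zero_of_sum_smul_mem_of_absLS_lt_one {Λ : Set V} (hN : IsUltrametricNorm k σ N)
    (hω : IsSuccessiveMinima (LaurentSeries k) N Λ ω) {r : ι → LaurentSeries k}
    (hr : ∑ j, r j • ω j ∈ Λ) (habs : ∀ j, absLS k σ (r j) < 1) : r = 0 := by
  by_contra hne
  obtain ⟨i, hri, htop⟩ := exists_ne_zero_forall_gt_eq_zero hne
  have hlower : N (ω i) ≤ N (∑ j, r j • ω j) :=
    hω.le_of_notMem_span i _ hr (sum_smul_notMem_span_lt (hω.notMem_span i) hri htop)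
  have : Nonempty ι := ⟨i⟩
  obtain ⟨j, -, hj⟩ := IsNonarchimedean.finset_image_add_of_nonempty hN.map_add_le_max
    (fun j => r j • ω j) Finset.univ_nonempty
  have hterm : N (r j • ω j) < N (ω i) := by
    rw [hN.map_smul]
    rcases eq_or_ne (r j) 0 with hrj | hrj
    · rw [hrj, absLS_zero, zero_mul]
      exact hN.pos (hω.ne_zero i)
    calc absLS k σ (r j) * N (ω j) < N (ω j) :=
          mul_lt_of_lt_one_left (hN.pos (hω.ne_zero j)) (habs j)
      _ ≤ N (ω i) := hω.monotone (not_lt.mp fun hij => hrj (htop j hij))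
  exact (hlower.trans hj).not_gt hterm

variable {d : ℕ} {b : Fin d → V}

theorem polyToLS_polyPart_eq_of_sum_smul_mem (hσ0 : 0 < σ) (hσ1 : σ < 1)
    (hN : IsUltrametricNorm k σ N) (hω : IsSuccessiveMinima (LaurentSeries k) N (latticeA k b) ω)
    {c : ι → LaurentSeries k} (hc : ∑ j, c j • ω j ∈ latticeA k b) (j : ι) :
    polyToLS k (polyPart (c j)) = c j := by
  have hfrac : ∑ j, (c j - polyToLS k (polyPart (c j))) • ω j ∈ latticeA k b := by
    simp only [sub_smul, Finset.sum_sub_distrib]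
    exact sub_mem_latticeA hc (sum_polyToLS_smul_mem_latticeA hω.mem _)
  have := congrFun (hω.eq_zero_of_sum_smul_mem_of_absLS_lt_one hN hfrac
    fun j => absLS_sub_polyToLS_polyPart_lt_one hσ0 hσ1 (c j)) j
  exact (sub_eq_zero.mp this).symm

theorem latticeA_inter_span_le_eq (hσ0 : 0 < σ) (hσ1 : σ < 1) (hN : IsUltrametricNorm k σ N)
    (hω : IsSuccessiveMinima (LaurentSeries k) N (latticeA k b) ω) (i : ι) :
    latticeA k b ∩ (span (LaurentSeries k) (ω '' {j | j ≤ i}) : Set V) =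
      {x | ∃ a : ι → Polynomial k, (∀ j, ¬ j ≤ i → a j = 0) ∧
        x = ∑ j, polyToLS k (a j) • ω j} := by
  ext x
  constructor
  · rintro ⟨hxΛ, hxspan⟩
    obtain ⟨c, hc, rfl⟩ := exists_eq_sum_smul_of_mem_span_image hxspan
    refine ⟨fun j => polyPart (c j), fun j hj => by simp [hc j hj], ?_⟩
    simp only [hω.polyToLS_polyPart_eq_of_sum_smul_mem hσ0 hσ1 hN hxΛ]
  · rintro ⟨a, ha, rfl⟩
    refine ⟨sum_polyToLS_smul_mem_latticeA hω.mem a, sum_mem fun j _ => ?_⟩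
    by_cases hj : j ≤ i
    · exact smul_mem _ _ (subset_span ⟨j, hj, rfl⟩)
    · simp [ha j hj]

theorem latticeA_eq (hσ0 : 0 < σ) (hσ1 : σ < 1) (hN : IsUltrametricNorm k σ N)
    (b : Module.Basis (Fin d) (LaurentSeries k) V) {ω : Fin d → V}
    (hω : IsSuccessiveMinima (LaurentSeries k) N (latticeA k b) ω) :
    latticeA k b = latticeA k ω := by
  have : FiniteDimensional (LaurentSeries k) V := b.finiteDimensional_of_finite
  have hspan : span (LaurentSeries k) (Set.range ω) = ⊤ :=
    (linearIndependent_of_notMem_span_lt hω.notMem_span).span_eq_top_of_card_eq_finrank'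
      (by rw [Module.finrank_eq_card_basis b])
  refine subset_antisymm (fun x hx => ?_) fun x ⟨a, hx⟩ =>
    hx ▸ sum_polyToLS_smul_mem_latticeA hω.mem a
  obtain ⟨c, rfl⟩ :=
    (mem_span_range_iff_exists_fun (LaurentSeries k)).mp (hspan ▸ mem_top (x := x))
  exact ⟨fun j => polyPart (c j), by
    simp only [hω.polyToLS_polyPart_eq_of_sum_smul_mem hσ0 hσ1 hN hx]⟩

end IsSuccessiveMinima

/-- For a greedy successive-minimum sequence `ω` of an `A`-lattice `Λ`, the intersection of `Λ`
with the `K∞`-span of `ω₁, …, ω_i` is the `A`-span of `ω₁, …, ω_i`; in particular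
`Λ` equals the `A`-span of `ω₁, …, ω_d`. -/
theorem stmt15 {k V : Type*} [Field k] [AddCommGroup V] [Module (LaurentSeries k) V]
    (σ : ℝ) (hσ0 : 0 < σ) (hσ1 : σ < 1)
    (N : V → ℝ)
    (hN0 : ∀ x : V, N x = 0 ↔ x = 0)
    (hNsmul : ∀ (c : LaurentSeries k) (x : V), N (c • x) = absLS k σ c * N x)
    (hNadd : ∀ x y : V, N (x + y) ≤ max (N x) (N y))
    {d : ℕ}
    (b : Module.Basis (Fin d) (LaurentSeries k) V)
    (ω : Fin d → V)
    (hωmem : ∀ i, ω i ∈ latticeA k b)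
    (hωnot : ∀ i, ω i ∉ Submodule.span (LaurentSeries k) (ω '' {j : Fin d | j < i}))
    (hωmin : ∀ i, ∀ x ∈ latticeA k b,
      x ∉ Submodule.span (LaurentSeries k) (ω '' {j : Fin d | j < i}) → N (ω i) ≤ N x) :
    (∀ i : Fin d,
        latticeA k b ∩ (Submodule.span (LaurentSeries k) (ω '' {j : Fin d | j ≤ i}) : Set V) =
          {x | ∃ a : Fin d → Polynomial k, (∀ j, ¬ j ≤ i → a j = 0) ∧
            x = ∑ j, polyToLS k (a j) • ω j}) ∧
      latticeA k b = latticeA k ω := by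
  have hN : IsUltrametricNorm k σ N := ⟨hN0, hNsmul, hNadd⟩
  have hω : IsSuccessiveMinima (LaurentSeries k) N (latticeA k b) ω :=
    ⟨hωmem, hωnot, hωmin⟩
  exact ⟨hω.latticeA_inter_span_le_eq hσ0 hσ1 hN, hω.latticeA_eq hσ0 hσ1 hN b⟩
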